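/- For η ≥ 0 the expression (3 + 12η² + 4η⁴)·erfc(η) − (η/√π)(10 + 4η²)·e^{−η²} is nonnegative and tends to 0 as η → ∞. -/

import Mathlib

/-!
The expression is `96 · i⁴erfc η`. Dividing it by `(3 + 2η²)²` gives a function whose derivative
is `48 (η erfc η - e^{-η²}/√π) / (3 + 2η²)³`, which is nonpositive by the Mills-ratio bound
`η ∫_η^∞ e^{-s²} ds ≤ ∫_η^∞ s e^{-s²} ds = e^{-η²}/2`. So the quotient is antitone; it tends to `0`
because the expression itself is `O(η⁴ e^{-η²})`, hence the quotient is nonnegative everywhere.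
-/

open Real Filter

noncomputable def erfc (x : ℝ) : ℝ :=
  (2 / Real.sqrt Real.pi) * ∫ s in Set.Ioi x, Real.exp (-s ^ 2)

open MeasureTheory Set Topology

theorem hasDerivAt_setIntegral_Ioi {E : Type*} [NormedAddCommGroup E] [NormedSpace ℝ E]
    [CompleteSpace E] {f : ℝ → E} (hf : Continuous f) (hint : Integrable f) (x : ℝ) :
    HasDerivAt (fun u => ∫ t in Ioi u, f t) (-f x) x := by
  have hsplit : (fun u => ∫ t in Ioi u, f t) = fun u => (∫ t in u..0, f t) + ∫ t in Ioi 0, f t :=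
    funext fun u => (intervalIntegral.integral_interval_add_Ioi hint.integrableOn
      hint.integrableOn).symm
  rw [hsplit]
  exact (intervalIntegral.integral_hasDerivAt_left (hf.intervalIntegrable _ _)
    hf.aestronglyMeasurable.stronglyMeasurableAtFilter hf.continuousAt).add_const _

theorem hasDerivAt_exp_neg_sq (x : ℝ) :
    HasDerivAt (fun t => exp (-t ^ 2)) (-2 * x * exp (-x ^ 2)) x :=
  (hasDerivAt_pow 2 x).fun_neg.exp.congr_deriv (by ring)

theorem integrable_exp_neg_sq : Integrable fun s : ℝ => exp (-s ^ 2) := by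
  simpa using integrable_exp_neg_mul_sq one_pos

theorem integral_Ioi_mul_exp_neg_sq (x : ℝ) :
    ∫ s in Ioi x, s * exp (-s ^ 2) = exp (-x ^ 2) / 2 := by
  have hderiv (s : ℝ) (_ : s ∈ Ici x) :
      HasDerivAt (fun t => -exp (-t ^ 2) / 2) (s * exp (-s ^ 2)) s :=
    (hasDerivAt_exp_neg_sq s).fun_neg.div_const 2 |>.congr_deriv (by ring)
  have hlim : Tendsto (fun t : ℝ => -exp (-t ^ 2) / 2) atTop (𝓝 (-0 / 2)) :=
    ((tendsto_exp_atBot.comp (tendsto_neg_atTop_atBot.comp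
      (tendsto_pow_atTop two_ne_zero))).neg).div_const 2
  have hint : IntegrableOn (fun s : ℝ => s * exp (-s ^ 2)) (Ioi x) := by
    simpa using (integrable_mul_exp_neg_mul_sq one_pos).integrableOn
  rw [integral_Ioi_of_hasDerivAt_of_tendsto' hderiv hint hlim]
  ring

theorem mul_integral_Ioi_exp_neg_sq_le (x : ℝ) :
    x * ∫ s in Ioi x, exp (-s ^ 2) ≤ exp (-x ^ 2) / 2 := by
  rw [← integral_const_mul, ← integral_Ioi_mul_exp_neg_sq x]
  refine setIntegral_mono_on (integrable_exp_neg_sq.const_mul x).integrableOn ?_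
    measurableSet_Ioi fun s hs => ?_
  · simpa using (integrable_mul_exp_neg_mul_sq one_pos).integrableOn
  · exact mul_le_mul_of_nonneg_right (le_of_lt hs) (exp_pos _).le

theorem hasDerivAt_erfc (x : ℝ) :
    HasDerivAt erfc (-(2 / √π) * exp (-x ^ 2)) x :=
  (hasDerivAt_setIntegral_Ioi (by fun_prop) integrable_exp_neg_sq x).const_mul (2 / √π)
    |>.congr_deriv (by ring)

theorem erfc_nonneg (x : ℝ) : 0 ≤ erfc x :=
  mul_nonneg (by positivity) (setIntegral_nonneg measurableSet_Ioi fun _ _ => (exp_pos _).le)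

theorem mul_erfc_le (x : ℝ) : x * erfc x ≤ exp (-x ^ 2) / √π := by
  have := mul_integral_Ioi_exp_neg_sq_le x
  rw [erfc, mul_left_comm, div_mul_eq_mul_div, mul_div_assoc]
  calc  2 * ((x * ∫ s in Ioi x, exp (-s ^ 2)) / √π) ≤ 2 * ((exp (-x ^ 2) / 2) / √π) := by gcongr
    _ = _ := by ring

theorem one_le_sqrt_pi : 1 ≤ √π :=
  Real.one_le_sqrt.mpr (by linarith [pi_gt_three])

theorem erfc_le_exp_neg_sq {x : ℝ} (hx : 1 ≤ x) : erfc x ≤ exp (-x ^ 2) :=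
  calc erfc x ≤ x * erfc x := le_mul_of_one_le_left (erfc_nonneg x) hx
    _ ≤ exp (-x ^ 2) / √π := mul_erfc_le x
    _ ≤ exp (-x ^ 2) := div_le_self (exp_pos _).le one_le_sqrt_pi

-- `96 · i⁴erfc η`, where `iⁿerfc` is the `n`-fold repeated integral of `erfc` from `η` to `∞`.
noncomputable def erfcQuartic (η : ℝ) : ℝ :=
  (3 + 12 * η ^ 2 + 4 * η ^ 4) * erfc η - (η / √π) * (10 + 4 * η ^ 2) * exp (-η ^ 2)

noncomputable def erfcQuarticRatio (η : ℝ) : ℝ :=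
  erfcQuartic η / (3 + 2 * η ^ 2) ^ 2

theorem hasDerivAt_erfcQuartic (x : ℝ) :
    HasDerivAt erfcQuartic
      ((24 * x + 16 * x ^ 3) * erfc x - (16 + 16 * x ^ 2) / √π * exp (-x ^ 2)) x := by
  have hπ : √π ≠ 0 := by positivity
  have hpoly : HasDerivAt (fun t : ℝ => 3 + 12 * t ^ 2 + 4 * t ^ 4) (24 * x + 16 * x ^ 3) x := by
    refine ((((hasDerivAt_pow 2 x).const_mul 12).const_add 3).add
      ((hasDerivAt_pow 4 x).const_mul 4)).congr_deriv ?_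
    push_cast
    ring
  have hlin : HasDerivAt (fun t : ℝ => t / √π) (1 / √π) x := (hasDerivAt_id x).div_const _
  have hquad : HasDerivAt (fun t : ℝ => 10 + 4 * t ^ 2) (8 * x) x := by
    refine (((hasDerivAt_pow 2 x).const_mul 4).const_add 10).congr_deriv ?_
    push_cast
    ring
  refine ((hpoly.fun_mul (hasDerivAt_erfc x)).fun_sub
    ((hlin.fun_mul hquad).fun_mul (hasDerivAt_exp_neg_sq x))).congr_deriv ?_
  field_simp
  ring

theorem hasDerivAt_erfcQuarticRatio (x : ℝ) :
    HasDerivAt erfcQuarticRatio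
      (48 * (x * erfc x - exp (-x ^ 2) / √π) / (3 + 2 * x ^ 2) ^ 3) x := by
  have hπ : √π ≠ 0 := by positivity
  have hden : HasDerivAt (fun t : ℝ => (3 + 2 * t ^ 2) ^ 2) (8 * x * (3 + 2 * x ^ 2)) x := by
    refine ((((hasDerivAt_pow 2 x).const_mul 2).const_add 3).fun_pow 2).congr_deriv ?_
    push_cast
    ring
  refine ((hasDerivAt_erfcQuartic x).fun_div hden (by positivity)).congr_deriv ?_
  rw [erfcQuartic]
  field_simp
  ring

theorem erfcQuarticRatio_antitone : Antitone erfcQuarticRatio := by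
  refine antitone_of_deriv_nonpos (fun x => (hasDerivAt_erfcQuarticRatio x).differentiableAt)
    fun x => ?_
  rw [(hasDerivAt_erfcQuarticRatio x).deriv]
  have := mul_erfc_le x
  exact div_nonpos_of_nonpos_of_nonneg (by linarith) (by positivity)

theorem abs_erfcQuartic_le {η : ℝ} (hη : 1 ≤ η) :
    |erfcQuartic η| ≤ 19 * (η ^ 2) ^ 2 * exp (-η ^ 2) := by
  have herfc := erfc_le_exp_neg_sq hη
  have hη2 : 1 ≤ η ^ 2 := one_le_pow₀ hη
  refine abs_sub_le_of_nonneg_of_le (by positivity [erfc_nonneg η]) ?_ (by positivity) ?_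
  · calc (3 + 12 * η ^ 2 + 4 * η ^ 4) * erfc η
          ≤ (3 + 12 * η ^ 2 + 4 * η ^ 4) * exp (-η ^ 2) := by gcongr
      _ ≤ 19 * (η ^ 2) ^ 2 * exp (-η ^ 2) := by
          gcongr ?_ * _
          nlinarith
  · calc η / √π * (10 + 4 * η ^ 2) * exp (-η ^ 2) ≤ η * (10 + 4 * η ^ 2) * exp (-η ^ 2) := by
          gcongr
          exact div_le_self (by linarith) one_le_sqrt_pi
      _ ≤ 19 * (η ^ 2) ^ 2 * exp (-η ^ 2) := by
          gcongr ?_ * _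
          nlinarith

theorem tendsto_erfcQuartic_atTop : Tendsto erfcQuartic atTop (𝓝 0) := by
  have hbound : Tendsto (fun η : ℝ => 19 * ((η ^ 2) ^ 2 * exp (-η ^ 2))) atTop (𝓝 0) := by
    simpa using ((tendsto_pow_mul_exp_neg_atTop_nhds_zero 2).comp
      (tendsto_pow_atTop two_ne_zero)).const_mul 19
  refine squeeze_zero_norm' ?_ hbound
  filter_upwards [eventually_ge_atTop 1] with η hη
  rw [Real.norm_eq_abs, ← mul_assoc]
  exact abs_erfcQuartic_le hη

theorem tendsto_erfcQuarticRatio_atTop : Tendsto erfcQuarticRatio atTop (𝓝 0) := by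
  refine tendsto_erfcQuartic_atTop.div_atTop ?_
  exact (tendsto_pow_atTop two_ne_zero).comp <| tendsto_atTop_add_const_left _ 3 <|
    (tendsto_pow_atTop two_ne_zero).const_mul_atTop two_pos

theorem erfcQuartic_nonneg (η : ℝ) : 0 ≤ erfcQuartic η := by
  have hratio : 0 ≤ erfcQuarticRatio η :=
    erfcQuarticRatio_antitone.le_of_tendsto tendsto_erfcQuarticRatio_atTop η
  have hden : 0 < (3 + 2 * η ^ 2) ^ 2 := by positivity
  simpa using (le_div_iff₀ hden).mp hratio

theorem stmt_6 :
    (∀ η : ℝ, 0 ≤ η →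
      0 ≤ (3 + 12 * η ^ 2 + 4 * η ^ 4) * erfc η - (η / Real.sqrt Real.pi) * (10 + 4 * η ^ 2) * Real.exp (-η ^ 2))
    ∧ Filter.Tendsto (fun η : ℝ =>
        (3 + 12 * η ^ 2 + 4 * η ^ 4) * erfc η - (η / Real.sqrt Real.pi) * (10 + 4 * η ^ 2) * Real.exp (-η ^ 2))
        Filter.atTop (nhds 0) :=
  ⟨fun η _ => erfcQuartic_nonneg η, tendsto_erfcQuartic_atTop⟩
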